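/- For all real $x > 0$, $a > 0$, complex $b$, and real $c > (1 - \mathrm{Re}(b))/a$ with $c > 0$, we have $\frac{1}{2\pi i}\int_{c-i\infty}^{c+i\infty} \Gamma(s)\,\zeta(as+b)^2\, x^{-s}\, ds = \sum_{n=1}^{\infty} \frac{d(n)}{n^b} e^{-n^a x}$, where $d(n)$ is the number of divisors of $n$. -/

import Mathlib

open Complex Real Filter MeasureTheory
open scoped LSeries.notation

/-!
On the line `Re s = c` we have `Re (a s + b) = a c + Re b > 1`, so `ζ(as+b)² = ∑ d(n) n^{-as-b}`
converges absolutely with a bound independent of `Im s`, and the integrand becomes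
`∑ d(n) n^{-b} (n^a x)^{-s} Γ(s)`. Since `|Γ(c+it)| ≤ Γ(c+2)/(c²+t²)` is integrable, sum and
integral may be exchanged, and Mellin inversion of `Γ(s) = ∫₀^∞ e^{-y} y^{s-1} dy` evaluates the
`n`-th integral as `2π e^{-n^a x}`.
-/

namespace Complex

theorem norm_Gamma_le_Gamma_re {s : ℂ} (hs : 0 < s.re) : ‖Gamma s‖ ≤ Real.Gamma s.re := by
  rw [Gamma_eq_integral hs, Real.Gamma_eq_integral hs, GammaIntegral]
  refine (norm_integral_le_integral_norm _).trans_eq ?_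
  refine setIntegral_congr_fun measurableSet_Ioi fun t ht => ?_
  rw [norm_mul, norm_real, Real.norm_eq_abs, norm_cpow_eq_rpow_re_of_pos ht,
    abs_of_pos (Real.exp_pos _)]
  simp

theorem norm_Gamma_mul_sq_le {s : ℂ} (hs : 0 < s.re) :
    ‖Gamma s‖ * ‖s‖ ^ 2 ≤ Real.Gamma (s.re + 2) := by
  have hs0 : s ≠ 0 := fun h => by simp [h] at hs
  have hs1 : s + 1 ≠ 0 := fun h => by
    have := congrArg re h
    simp at this
    linarith
  have hGamma : Gamma (s + 2) = (s + 1) * s * Gamma s := by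
    rw [show s + 2 = s + 1 + 1 by ring, Gamma_add_one _ hs1, Gamma_add_one _ hs0, mul_assoc]
  have hnorm : ‖s‖ ≤ ‖s + 1‖ := by
    rw [← sq_le_sq₀ (norm_nonneg _) (norm_nonneg _), Complex.sq_norm, Complex.sq_norm,
      normSq_apply, normSq_apply]
    simp only [add_re, add_im, one_re, one_im]
    nlinarith
  calc ‖Gamma s‖ * ‖s‖ ^ 2 ≤ ‖Gamma s‖ * (‖s + 1‖ * ‖s‖) := by
        rw [sq]; gcongr
    _ = ‖Gamma (s + 2)‖ := by rw [hGamma, norm_mul, norm_mul]; ring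
    _ ≤ Real.Gamma (s.re + 2) := by
        simpa using norm_Gamma_le_Gamma_re (s := s + 2) (by simp; linarith)

theorem continuous_Gamma_vertical {c : ℝ} (hc : 0 < c) :
    Continuous fun t : ℝ => Gamma (c + t * I) := by
  refine continuous_iff_continuousAt.mpr fun t => ?_
  refine (differentiableAt_Gamma _ fun m h => ?_).continuousAt.comp (by fun_prop)
  have := congrArg re h
  simp at this
  linarith [m.cast_nonneg (α := ℝ)]

theorem verticalIntegrable_Gamma {c : ℝ} (hc : 0 < c) : VerticalIntegrable Gamma c := by
  have hdecay : Integrable fun t : ℝ => Real.Gamma (c + 2) * (c ^ 2 + t ^ 2)⁻¹ := by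
    refine ((integrable_inv_one_add_sq.comp_div hc.ne').const_mul
      (Real.Gamma (c + 2) * (c ^ 2)⁻¹)).congr (Eventually.of_forall fun t => ?_)
    field_simp
  refine hdecay.mono' (continuous_Gamma_vertical hc).aestronglyMeasurable
    (Eventually.of_forall fun t => ?_)
  have hsq : ‖(c : ℂ) + t * I‖ ^ 2 = c ^ 2 + t ^ 2 := by
    rw [Complex.sq_norm, normSq_apply]; simp; ring
  rw [← div_eq_mul_inv, le_div_iff₀ (by positivity), ← hsq]
  simpa using norm_Gamma_mul_sq_le (s := c + t * I) (by simpa using hc)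

theorem mellinInv_Gamma {c y : ℝ} (hc : 0 < c) (hy : 0 < y) :
    mellinInv c Gamma y = Real.exp (-y) := by
  set f : ℝ → ℂ := fun t => Real.exp (-t)
  have hline : ∀ t : ℝ, mellin f (c + t * I) = Gamma (c + t * I) := fun t => by
    rw [← GammaIntegral_eq_mellin, Gamma_eq_integral (by simpa using hc)]
  have hconv : MellinConvergent f c := by
    refine (GammaIntegral_convergent (s := c) (by simpa using hc)).congr_fun
      (fun t _ => ?_) measurableSet_Ioi
    simp [f, smul_eq_mul, mul_comm]
  have hvert : VerticalIntegrable (mellin f) c := by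
    simpa only [VerticalIntegrable, hline] using verticalIntegrable_Gamma hc
  calc mellinInv c Gamma y = mellinInv c (mellin f) y := by simp only [mellinInv, hline]
    _ = f y := mellinInv_mellin_eq c f hy hconv hvert (by fun_prop)

theorem integrable_cpow_neg_mul_Gamma {c y : ℝ} (hc : 0 < c) (hy : 0 < y) :
    Integrable fun t : ℝ => (y : ℂ) ^ (-(c + t * I)) * Gamma (c + t * I) := by
  refine (verticalIntegrable_Gamma hc).bdd_mul (c := y ^ (-c)) ?_
    (Eventually.of_forall fun t => ?_)
  · exact (Continuous.const_cpow (by fun_prop)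
      (Or.inl (ofReal_ne_zero.mpr hy.ne'))).aestronglyMeasurable
  · simp [norm_cpow_eq_rpow_re_of_pos hy]

theorem integral_cpow_neg_mul_Gamma {c y : ℝ} (hc : 0 < c) (hy : 0 < y) :
    ∫ t : ℝ, (y : ℂ) ^ (-(c + t * I)) * Gamma (c + t * I) = 2 * π * Real.exp (-y) := by
  have h := mellinInv_Gamma hc hy
  have h2π : (2 * π : ℂ) ≠ 0 := by exact_mod_cast two_pi_pos.ne'
  rw [mellinInv, real_smul] at h
  simp only [smul_eq_mul] at h
  rw [← h, ← mul_assoc]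
  push_cast
  rw [mul_one_div_cancel h2π, one_mul]

end Complex

namespace LSeries

lemma term_mul_cpow_neg (f : ℕ → ℂ) (a : ℝ) (b s : ℂ) {x : ℝ} (hx : 0 ≤ x) (n : ℕ) :
    term f (a * s + b) n * (x : ℂ) ^ (-s) = term f b n * (((n : ℝ) ^ a * x : ℝ) : ℂ) ^ (-s) := by
  rcases eq_or_ne n 0 with rfl | hn
  · simp
  have hn0 : (n : ℂ) ≠ 0 := Nat.cast_ne_zero.mpr hn
  rw [term_of_ne_zero hn, term_of_ne_zero hn, ofReal_mul,
    mul_cpow_ofReal_nonneg (by positivity) hx, ← cpow_mul_ofReal_nonneg (Nat.cast_nonneg n),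
    ofReal_natCast, cpow_add _ _ hn0, mul_neg]
  simp only [cpow_neg]
  field_simp

lemma convolution_one_one_apply (n : ℕ) : ((1 : ℕ → ℂ) ⍟ 1) n = n.divisors.card := by
  rw [convolution_def]
  simp only [Pi.one_apply, Finset.sum_const, nsmul_eq_mul, mul_one]
  rw [← Nat.map_div_right_divisors, Finset.card_map]

end LSeries

theorem LSeriesSummable_divisors_card {s : ℂ} (hs : 1 < s.re) :
    LSeriesSummable (fun n ↦ (n.divisors.card : ℂ)) s := by
  have h1 : LSeriesSummable 1 s := LSeriesSummable_one_iff.mpr hs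
  simpa only [← LSeries.convolution_one_one_apply] using h1.convolution h1

theorem LSeries_divisors_card {s : ℂ} (hs : 1 < s.re) :
    LSeries (fun n ↦ (n.divisors.card : ℂ)) s = riemannZeta s ^ 2 := by
  have h1 : LSeriesSummable 1 s := LSeriesSummable_one_iff.mpr hs
  simp only [← LSeries.convolution_one_one_apply]
  rw [LSeries_convolution' h1 h1, LSeries_one_eq_riemannZeta hs, sq]

theorem integral_Gamma_mul_LSeries_mul_cpow_neg {f : ℕ → ℂ} {a c x : ℝ} {b : ℂ} (hc : 0 < c)
    (hx : 0 < x) (hf : LSeriesSummable f (a * c + b)) :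
    ∫ t : ℝ, Complex.Gamma (c + t * I) * LSeries f (a * (c + t * I) + b) *
        (x : ℂ) ^ (-(c + t * I)) =
      2 * π * ∑' n : ℕ, LSeries.term f b n * cexp (-(((n : ℝ) ^ a * x : ℝ) : ℂ)) := by
  set s : ℝ → ℂ := fun t => c + t * I
  set y : ℕ → ℝ := fun n => (n : ℝ) ^ a * x
  have hy : ∀ n, n ≠ 0 → 0 < y n := fun n hn =>
    mul_pos (rpow_pos_of_pos (Nat.cast_pos.mpr (Nat.pos_of_ne_zero hn)) a) hx
  set F : ℕ → ℝ → ℂ := fun n t =>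
    LSeries.term f b n * ((y n : ℂ) ^ (-s t) * Complex.Gamma (s t))
  have hexpand : ∀ t, Complex.Gamma (s t) * LSeries f (a * s t + b) * (x : ℂ) ^ (-s t) =
      ∑' n, F n t := by
    intro t
    rw [LSeries, mul_comm (Complex.Gamma _), mul_right_comm, ← tsum_mul_right,
      ← tsum_mul_right]
    refine tsum_congr fun n => ?_
    rw [LSeries.term_mul_cpow_neg f a b (s t) hx.le n, mul_assoc]
  have hnorm : ∀ n t,
      ‖F n t‖ = ‖LSeries.term f (a * c + b) n‖ * x ^ (-c) * ‖Complex.Gamma (s t)‖ := by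
    intro n t
    simp only [F, y, ← mul_assoc, ← LSeries.term_mul_cpow_neg f a b (s t) hx.le n, norm_mul,
      norm_cpow_eq_rpow_re_of_pos hx]
    simp [LSeries.norm_term_eq, s]
  have hint : ∀ n, Integrable (F n) := by
    intro n
    rcases eq_or_ne n 0 with rfl | hn
    · simp [F]
    · exact (integrable_cpow_neg_mul_Gamma hc (hy n hn)).const_mul _
  have hsum : Summable fun n => ∫ t, ‖F n t‖ := by
    simp_rw [hnorm, integral_const_mul]
    exact (hf.norm.mul_right _).mul_right _
  have hterm : ∀ n, ∫ t, F n t = 2 * π * (LSeries.term f b n * cexp (-(y n : ℂ))) := by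
    intro n
    rcases eq_or_ne n 0 with rfl | hn
    · simp [F]
    · rw [integral_const_mul, integral_cpow_neg_mul_Gamma hc (hy n hn), ofReal_exp, ofReal_neg]
      ring
  calc _ = ∫ t, ∑' n, F n t := integral_congr_ae (Eventually.of_forall hexpand)
    _ = ∑' n, ∫ t, F n t := (integral_tsum_of_summable_integral_norm hint hsum).symm
    _ = _ := by rw [tsum_congr hterm, tsum_mul_left]

/-- Mellin–Barnes identity for the divisor function `d(n)`. -/
theorem mellin_barnes_divisor (x a : ℝ) (b : ℂ) (c : ℝ)
    (hx : 0 < x) (ha : 0 < a) (hc0 : 0 < c) (hc : (1 - b.re) / a < c) :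
    (2 * (π : ℂ) * Complex.I)⁻¹ *
      (Complex.I * ∫ t : ℝ, Complex.Gamma ((c : ℂ) + (t : ℂ) * Complex.I) *
        riemannZeta ((a : ℂ) * ((c : ℂ) + (t : ℂ) * Complex.I) + b) ^ 2 *
        (x : ℂ) ^ (-((c : ℂ) + (t : ℂ) * Complex.I))) =
    ∑' n : ℕ, ((n + 1 : ℕ).divisors.card : ℂ) / ((n + 1 : ℕ) : ℂ) ^ b *
      Complex.exp (-((((n + 1 : ℕ) : ℝ) ^ a * x : ℝ) : ℂ)) := by
  have hre : 1 < ((a : ℂ) * c + b).re := by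
    rw [div_lt_iff₀ ha] at hc
    simp only [add_re, mul_re, ofReal_re, ofReal_im, mul_zero, sub_zero]
    linarith
  have hzeta : ∀ t : ℝ, riemannZeta (a * (c + t * I) + b) ^ 2 =
      LSeries (fun n ↦ (n.divisors.card : ℂ)) (a * (c + t * I) + b) :=
    fun t => (LSeries_divisors_card (by simpa using hre)).symm
  simp_rw [hzeta]
  rw [integral_Gamma_mul_LSeries_mul_cpow_neg hc0 hx (LSeriesSummable_divisors_card hre),
    ← (add_left_injective 1).tsum_eq]
  · rw [← mul_assoc, ← mul_assoc, show (2 * π * I : ℂ)⁻¹ * I * (2 * π) = 1 by field_simp,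
      one_mul]
    exact tsum_congr fun n => by rw [LSeries.term_of_ne_zero n.succ_ne_zero]
  · intro n hn
    exact ⟨n - 1, Nat.sub_add_cancel (Nat.pos_of_ne_zero fun h => hn (by simp [h]))⟩
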